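/- arXiv:1606.08216 — 2 statements merged into one kernel-verified Lean document; each statement's English description precedes it below -/
import Mathlib

section
/- Let K be a nonempty closed convex subset of a uniformly convex real Banach space E with a partial order ≤ induced by a closed convex cone P, and let T : K → K be a monotone α-nonexpansive mapping for some α < 1. If there exists x₀ ∈ K with x₀ ≤ Tx₀ such that the orbit O(x₀) = {Tⁿx₀ : n = 0, 1, 2, ...} is bounded in norm, then T has a fixed point z ∈ K with x₀ ≤ z. -/
open Filter Topology

/-- A closed convex cone in a real normed space: nonempty, closed, not `{0}`,
pointed (`P ∩ (−P) = {0}`), and closed under nonnegative linear combinations. -/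
def IsClosedConvexCone {E : Type*} [NormedAddCommGroup E] [NormedSpace ℝ E]
    (P : Set E) : Prop :=
  P.Nonempty ∧ IsClosed P ∧ P ≠ {0} ∧ P ∩ (-P) = {0} ∧
    ∀ x ∈ P, ∀ y ∈ P, ∀ a b : ℝ, 0 ≤ a → 0 ≤ b → a • x + b • y ∈ P

/-- Weak convergence of a sequence: `f (x n) → f l` for every continuous
linear functional `f`. -/
def WeakConv {E : Type*} [NormedAddCommGroup E] [NormedSpace ℝ E]
    (x : ℕ → E) (l : E) : Prop :=
  ∀ f : E →L[ℝ] ℝ, Tendsto (fun n => f (x n)) atTop (𝓝 (f l))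

/-- `T` is monotone (w.r.t. the order `x ≤ y ↔ y - x ∈ P`) and α-nonexpansive
on `K`. -/
def MonotoneAlphaNonexpansive {E : Type*} [NormedAddCommGroup E] [NormedSpace ℝ E]
    (P K : Set E) (T : E → E) (α : ℝ) : Prop :=
  (∀ x ∈ K, ∀ y ∈ K, y - x ∈ P → T y - T x ∈ P) ∧
    ∀ x ∈ K, ∀ y ∈ K, y - x ∈ P →
      ‖T x - T y‖ ^ 2 ≤ α * ‖T x - y‖ ^ 2 + α * ‖T y - x‖ ^ 2
        + (1 - 2 * α) * ‖x - y‖ ^ 2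

/-!
Let `xₙ = Tⁿ x₀` and `g z = limsup_N (1/N) ∑_{n<N} ‖xₙ - z‖²`. The orbit is increasing, so the
sets `Dₙ = {w ∈ K | xₙ ≤ w}` decrease. In a uniformly convex space `g` is uniformly convex on
bounded sets; it is also coercive and lower semicontinuous, so a minimizing sequence for `g` along
the `Dₙ` is Cauchy and `g` has a unique minimizer `z` on `⋂ Dₙ`. Monotonicity of `T` keeps `T z`
in `⋂ Dₙ`, and summing the α-nonexpansive inequality for the pairs `xₙ ≤ z` telescopes to
`g (T z) ≤ g z`; averaging rather than taking a plain `limsup` is what makes this work for every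
`α < 1`. Uniqueness of the minimizer gives `T z = z`.
-/

section Cesaro

open Finset

noncomputable def cesaroMean (u : ℕ → ℝ) (N : ℕ) : ℝ := (∑ n ∈ range N, u n) / N

lemma cesaroMean_nonneg {u : ℕ → ℝ} (hu : ∀ n, 0 ≤ u n) (N : ℕ) : 0 ≤ cesaroMean u N :=
  div_nonneg (sum_nonneg fun n _ => hu n) N.cast_nonneg

lemma cesaroMean_le {u : ℕ → ℝ} {K : ℝ} (hu : ∀ n, u n ≤ K) (hK : 0 ≤ K) (N : ℕ) :
    cesaroMean u N ≤ K :=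
  div_le_of_le_mul₀ N.cast_nonneg hK <| by
    simpa [mul_comm] using sum_le_sum fun n (_ : n ∈ range N) => hu n

lemma le_cesaroMean {u : ℕ → ℝ} {K : ℝ} (hu : ∀ n, K ≤ u n) {N : ℕ} (hN : N ≠ 0) :
    K ≤ cesaroMean u N := by
  rw [cesaroMean, le_div_iff₀ (by positivity)]
  simpa [mul_comm] using sum_le_sum fun n (_ : n ∈ range N) => hu n

lemma cesaroMean_le_add_of_le {u v : ℕ → ℝ} {c : ℝ} (h : ∀ n, u n ≤ v n + c) {N : ℕ}
    (hN : N ≠ 0) : cesaroMean u N ≤ cesaroMean v N + c := by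
  have hN' : (0 : ℝ) < N := by positivity
  rw [cesaroMean, cesaroMean, div_add' _ _ _ hN'.ne', div_le_div_iff_of_pos_right hN']
  simpa [sum_add_distrib, mul_comm] using sum_le_sum fun n (_ : n ∈ range N) => h n

lemma cesaroMean_le_midpoint_of_le {u v w : ℕ → ℝ} {c : ℝ}
    (h : ∀ n, u n ≤ (v n + w n) / 2 - c) {N : ℕ} (hN : N ≠ 0) :
    cesaroMean u N ≤ (cesaroMean v N + cesaroMean w N) / 2 - c := by
  have hN' : (0 : ℝ) < N := by positivity
  have hsum := sum_le_sum fun n (_ : n ∈ range N) => h n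
  rw [sum_sub_distrib, ← sum_div, sum_add_distrib, sum_const, card_range, nsmul_eq_mul] at hsum
  rw [cesaroMean, cesaroMean, cesaroMean]
  field_simp
  linarith

lemma sum_range_le_of_step {A B : ℕ → ℝ} {α : ℝ}
    (h : ∀ n, A (n + 1) ≤ α * B (n + 1) + α * A n + (1 - 2 * α) * B n) (N : ℕ) :
    (1 - α) * ∑ n ∈ range N, A n + A N - α * B N
      ≤ (1 - α) * ∑ n ∈ range N, B n + A 0 - α * B 0 := by
  induction N with
  | zero => simp
  | succ N ih =>
    rw [sum_range_succ, sum_range_succ]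
    linarith [h N]

lemma cesaroMean_le_of_step {A B : ℕ → ℝ} {α K : ℝ} (hα : α < 1) (hA : ∀ n, 0 ≤ A n)
    (hB : ∀ n, 0 ≤ B n ∧ B n ≤ K)
    (h : ∀ n, A (n + 1) ≤ α * B (n + 1) + α * A n + (1 - 2 * α) * B n) (N : ℕ) :
    cesaroMean A N ≤ cesaroMean B N + (A 0 + |α| * K) / (1 - α) / N := by
  have h1α : 0 < 1 - α := by linarith
  have hosc : α * (B N - B 0) ≤ |α| * K :=
    calc α * (B N - B 0) ≤ |α| * |B N - B 0| := by
          rw [← abs_mul]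
          exact le_abs_self _
      _ ≤ |α| * K := by
          gcongr
          rw [abs_le]
          constructor <;> linarith [hB N, hB 0]
  have hsum : ∑ n ∈ range N, A n ≤ ∑ n ∈ range N, B n + (A 0 + |α| * K) / (1 - α) := by
    rw [← sub_le_iff_le_add', le_div_iff₀ h1α]
    linarith [sum_range_le_of_step h N, hA N]
  rw [cesaroMean, cesaroMean, ← add_div]
  exact div_le_div_of_nonneg_right hsum N.cast_nonneg

end Cesaro

lemma limsup_le_limsup_add_of_le {u v e : ℕ → ℝ} {c : ℝ} (hu : ∀ n, 0 ≤ u n)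
    (hv : BddAbove (Set.range v)) (he : Tendsto e atTop (𝓝 c))
    (h : ∀ᶠ n in atTop, u n ≤ v n + e n) : limsup u atTop ≤ limsup v atTop + c := by
  refine le_of_forall_pos_le_add fun ε hε => limsup_le_of_le (isCoboundedUnder_le_of_le _ hu) ?_
  filter_upwards [h, eventually_lt_of_limsup_lt (lt_add_of_pos_right _ (half_pos hε))
    hv.isBoundedUnder_of_range, he.eventually (gt_mem_nhds (lt_add_of_pos_right c (half_pos hε)))]
    with n hn hvn hen
  linarith

lemma limsup_le_midpoint_of_le {u v w : ℕ → ℝ} {c : ℝ} (hu : ∀ n, 0 ≤ u n)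
    (hv : BddAbove (Set.range v)) (hw : BddAbove (Set.range w))
    (h : ∀ᶠ n in atTop, u n ≤ (v n + w n) / 2 - c) :
    limsup u atTop ≤ (limsup v atTop + limsup w atTop) / 2 - c := by
  refine le_of_forall_pos_le_add fun ε hε => limsup_le_of_le (isCoboundedUnder_le_of_le _ hu) ?_
  filter_upwards [h, eventually_lt_of_limsup_lt (lt_add_of_pos_right _ hε)
    hv.isBoundedUnder_of_range, eventually_lt_of_limsup_lt (lt_add_of_pos_right _ hε)
    hw.isBoundedUnder_of_range] with n hn hvn hwn
  linarith

/-- Either `b ≤ (1 - δ/4) a`, and the gap comes from `(a - b)²`, or `b` is close to `a`, and it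
comes from `s ≤ (2 - δ) a`; in both cases `a ≥ c/2` turns it into a multiple of `c²`. -/
lemma sq_le_of_le_two_sub_mul {a b s c δ : ℝ} (hb : 0 ≤ b) (hba : b ≤ a) (hs : 0 ≤ s)
    (hc : 0 ≤ c) (hδ : 0 < δ) (hcab : c ≤ a + b) (hsab : s ≤ a + b)
    (hsδ : s ≤ (2 - δ) * a) : s ^ 2 / 4 ≤ (a ^ 2 + b ^ 2) / 2 - δ ^ 2 * c ^ 2 / 256 := by
  have hca : c ≤ 2 * a := by linarith
  rcases le_total b ((1 - δ / 4) * a) with hfar | hnear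
  · have hgap : δ * c / 8 ≤ a - b := by nlinarith
    have : (δ * c / 8) ^ 2 ≤ (a - b) ^ 2 := pow_le_pow_left₀ (by positivity) hgap 2
    nlinarith [pow_le_pow_left₀ hs hsab 2]
  · have h1 : s ^ 2 ≤ ((2 - δ) * a) ^ 2 := pow_le_pow_left₀ hs hsδ 2
    have h2 : ((1 - δ / 4) * a) ^ 2 ≤ b ^ 2 := pow_le_pow_left₀ (by nlinarith) hnear 2
    have h3 : c ^ 2 ≤ 4 * a ^ 2 := by nlinarith
    nlinarith [mul_le_mul_of_nonneg_left h3 (by nlinarith : (0 : ℝ) ≤ δ ^ 2)]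

section

variable {E : Type*} [NormedAddCommGroup E]

noncomputable def asymptoticSqDist (x : ℕ → E) (z : E) : ℝ :=
  limsup (cesaroMean fun n => ‖x n - z‖ ^ 2) atTop

variable {x : ℕ → E} {M : ℝ}

lemma norm_sub_le_of_forall_norm_le (hx : ∀ n, ‖x n‖ ≤ M) (z : E) (n : ℕ) :
    ‖x n - z‖ ≤ M + ‖z‖ :=
  (norm_sub_le _ _).trans (by linarith [hx n])

lemma cesaroMean_sqDist_nonneg (z : E) (N : ℕ) : 0 ≤ cesaroMean (fun n => ‖x n - z‖ ^ 2) N :=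
  cesaroMean_nonneg (fun _ => sq_nonneg _) N

lemma cesaroMean_sqDist_le (hx : ∀ n, ‖x n‖ ≤ M) (z : E) (N : ℕ) :
    cesaroMean (fun n => ‖x n - z‖ ^ 2) N ≤ (M + ‖z‖) ^ 2 :=
  cesaroMean_le (fun n => pow_le_pow_left₀ (norm_nonneg _)
    (norm_sub_le_of_forall_norm_le hx z n) 2) (sq_nonneg _) N

lemma bddAbove_cesaroMean_sqDist (hx : ∀ n, ‖x n‖ ≤ M) (z : E) :
    BddAbove (Set.range (cesaroMean fun n => ‖x n - z‖ ^ 2)) :=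
  ⟨(M + ‖z‖) ^ 2, by rintro _ ⟨N, rfl⟩; exact cesaroMean_sqDist_le hx z N⟩

lemma le_asymptoticSqDist_of_forall_le (hx : ∀ n, ‖x n‖ ≤ M) {z : E} {a : ℝ}
    (h : ∀ n, a ≤ ‖x n - z‖ ^ 2) : a ≤ asymptoticSqDist x z :=
  le_limsup_of_frequently_le
    ((eventually_ne_atTop 0).mono fun _ hN => le_cesaroMean h hN).frequently
    (bddAbove_cesaroMean_sqDist hx z).isBoundedUnder_of_range

lemma asymptoticSqDist_nonneg (hx : ∀ n, ‖x n‖ ≤ M) (z : E) : 0 ≤ asymptoticSqDist x z :=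
  le_asymptoticSqDist_of_forall_le hx fun _ => sq_nonneg _

lemma asymptoticSqDist_le (hx : ∀ n, ‖x n‖ ≤ M) (z : E) :
    asymptoticSqDist x z ≤ (M + ‖z‖) ^ 2 :=
  limsup_le_of_le (isCoboundedUnder_le_of_le _ (cesaroMean_sqDist_nonneg z))
    (Eventually.of_forall (cesaroMean_sqDist_le hx z))

lemma asymptoticSqDist_apply_le (hx : ∀ n, ‖x n‖ ≤ M) (k : ℕ) :
    asymptoticSqDist x (x k) ≤ (2 * M) ^ 2 :=
  (asymptoticSqDist_le hx _).trans
    (pow_le_pow_left₀ (by linarith [norm_nonneg (x k), hx k]) (by linarith [hx k]) 2)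

lemma norm_le_of_asymptoticSqDist_le (hx : ∀ n, ‖x n‖ ≤ M) {z : E} {c : ℝ}
    (h : asymptoticSqDist x z ≤ c) : ‖z‖ ≤ M + √c := by
  rcases le_total ‖z‖ M with hzM | hMz
  · linarith [Real.sqrt_nonneg c]
  have hpt : ∀ n, (‖z‖ - M) ^ 2 ≤ ‖x n - z‖ ^ 2 := fun n => by
    have := norm_sub_norm_le z (x n)
    rw [norm_sub_rev] at this
    exact pow_le_pow_left₀ (by linarith) (by linarith [hx n]) 2
  linarith [Real.le_sqrt_of_sq_le ((le_asymptoticSqDist_of_forall_le hx hpt).trans h)]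

lemma asymptoticSqDist_le_add (hx : ∀ n, ‖x n‖ ≤ M) (z w : E) :
    asymptoticSqDist x z ≤ asymptoticSqDist x w + (2 * M + ‖z‖ + ‖w‖) * ‖z - w‖ := by
  have hpt : ∀ n, ‖x n - z‖ ^ 2 ≤ ‖x n - w‖ ^ 2 + (2 * M + ‖z‖ + ‖w‖) * ‖z - w‖ := fun n => by
    have hdiff : ‖x n - z‖ - ‖x n - w‖ ≤ ‖z - w‖ := by
      simpa [norm_sub_rev z w] using norm_sub_norm_le (x n - z) (x n - w)
    have hsum := add_le_add (norm_sub_le_of_forall_norm_le hx z n)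
      (norm_sub_le_of_forall_norm_le hx w n)
    nlinarith [mul_le_mul_of_nonneg_right hdiff (add_nonneg (norm_nonneg (x n - z))
      (norm_nonneg (x n - w))), mul_le_mul_of_nonneg_left hsum (norm_nonneg (z - w))]
  exact limsup_le_limsup_add_of_le (cesaroMean_sqDist_nonneg z)
    (bddAbove_cesaroMean_sqDist hx w) tendsto_const_nhds
    ((eventually_ne_atTop 0).mono fun _ hN => cesaroMean_le_add_of_le hpt hN)

lemma lowerSemicontinuous_asymptoticSqDist (hx : ∀ n, ‖x n‖ ≤ M) :
    LowerSemicontinuous (asymptoticSqDist x) := by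
  intro z a ha
  have hcont : Continuous fun w => asymptoticSqDist x z - (2 * M + ‖z‖ + ‖w‖) * ‖z - w‖ := by
    fun_prop
  have hlim : Tendsto (fun w => asymptoticSqDist x z - (2 * M + ‖z‖ + ‖w‖) * ‖z - w‖) (𝓝 z)
      (𝓝 (asymptoticSqDist x z)) := by
    simpa using hcont.tendsto z
  filter_upwards [hlim.eventually (lt_mem_nhds ha)] with w hw
  linarith [asymptoticSqDist_le_add hx z w]

lemma asymptoticSqDist_le_of_step (hx : ∀ n, ‖x n‖ ≤ M) {α : ℝ} (hα : α < 1) {z w : E}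
    (h : ∀ n, ‖x (n + 1) - w‖ ^ 2 ≤ α * ‖x (n + 1) - z‖ ^ 2 + α * ‖x n - w‖ ^ 2
      + (1 - 2 * α) * ‖x n - z‖ ^ 2) :
    asymptoticSqDist x w ≤ asymptoticSqDist x z := by
  have hB : ∀ n, 0 ≤ ‖x n - z‖ ^ 2 ∧ ‖x n - z‖ ^ 2 ≤ (M + ‖z‖) ^ 2 := fun n =>
    ⟨sq_nonneg _, pow_le_pow_left₀ (norm_nonneg _) (norm_sub_le_of_forall_norm_le hx z n) 2⟩
  rw [← add_zero (asymptoticSqDist x z)]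
  exact limsup_le_limsup_add_of_le (cesaroMean_sqDist_nonneg w)
    (bddAbove_cesaroMean_sqDist hx z) (tendsto_const_div_atTop_nhds_zero_nat _)
    (Eventually.of_forall (cesaroMean_le_of_step hα (fun n => sq_nonneg _) hB h))

variable [NormedSpace ℝ E]

lemma exists_norm_add_le_two_sub_mul [UniformConvexSpace E] (R : ℝ) {c : ℝ} (hc : 0 < c) :
    ∃ δ, 0 < δ ∧ ∀ ⦃p q : E⦄, ‖q‖ ≤ ‖p‖ → ‖p‖ ≤ R → c ≤ ‖p - q‖ →
      ‖p + q‖ ≤ (2 - δ) * ‖p‖ := by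
  obtain ⟨δ, hδ, h⟩ :=
    exists_forall_closed_ball_dist_add_le_two_sub E (div_pos hc (lt_max_of_lt_right hc))
  refine ⟨δ, hδ, fun p q hqp hpR hpq => ?_⟩
  have hp : 0 < ‖p‖ := by linarith [norm_sub_le p q]
  have hscale : ∀ v : E, ‖‖p‖⁻¹ • v‖ = ‖v‖ / ‖p‖ := fun v => by
    rw [norm_smul_of_nonneg (inv_nonneg.2 hp.le), inv_mul_eq_div]
  have key := h (x := ‖p‖⁻¹ • p) (y := ‖p‖⁻¹ • q) (by rw [hscale, div_self hp.ne'])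
    (by rwa [hscale, div_le_one hp]) (by
      rw [← smul_sub, hscale]
      exact div_le_div₀ (norm_nonneg _) hpq hp (hpR.trans (le_max_left R c)))
  rwa [← smul_add, hscale, div_le_iff₀ hp] at key

lemma exists_norm_midpoint_sq_le [UniformConvexSpace E] (R : ℝ) {c : ℝ} (hc : 0 < c) :
    ∃ ψ, 0 < ψ ∧ ∀ ⦃p q : E⦄, ‖p‖ ≤ R → ‖q‖ ≤ R → c ≤ ‖p - q‖ →
      ‖midpoint ℝ p q‖ ^ 2 ≤ (‖p‖ ^ 2 + ‖q‖ ^ 2) / 2 - ψ := by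
  obtain ⟨δ, hδ, h⟩ := exists_norm_add_le_two_sub_mul (E := E) R hc
  refine ⟨δ ^ 2 * c ^ 2 / 256, by positivity, ?_⟩
  suffices key : ∀ ⦃p q : E⦄, ‖q‖ ≤ ‖p‖ → ‖p‖ ≤ R → c ≤ ‖p - q‖ →
      ‖midpoint ℝ p q‖ ^ 2 ≤ (‖p‖ ^ 2 + ‖q‖ ^ 2) / 2 - δ ^ 2 * c ^ 2 / 256 by
    intro p q hp hq hpq
    rcases le_total ‖q‖ ‖p‖ with hqp | hpq'
    · exact key hqp hp hpq
    · simpa only [midpoint_comm, add_comm] using key hpq' hq (by rwa [norm_sub_rev])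
  intro p q hqp hpR hpq
  have hmid : ‖midpoint ℝ p q‖ ^ 2 = ‖p + q‖ ^ 2 / 4 := by
    rw [midpoint_eq_smul_add, norm_smul]
    norm_num
    ring
  rw [hmid]
  exact sq_le_of_le_two_sub_mul (norm_nonneg q) hqp (norm_nonneg _) hc.le hδ
    (hpq.trans (norm_sub_le p q)) (norm_add_le p q) (h hqp hpR hpq)

/-- Unlike Mathlib's `UniformConvexOn`, only midpoints are constrained, and the gap `ψ` may
depend on the radius `R`. -/
def MidpointUniformlyConvex (g : E → ℝ) : Prop :=
  ∀ R c : ℝ, 0 < c → ∃ ψ, 0 < ψ ∧ ∀ ⦃u v : E⦄, ‖u‖ ≤ R → ‖v‖ ≤ R → c ≤ ‖u - v‖ →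
    g (midpoint ℝ u v) ≤ (g u + g v) / 2 - ψ

lemma midpointUniformlyConvex_asymptoticSqDist [UniformConvexSpace E] (hx : ∀ n, ‖x n‖ ≤ M) :
    MidpointUniformlyConvex (asymptoticSqDist x) := by
  intro R c hc
  obtain ⟨ψ, hψ, h⟩ := exists_norm_midpoint_sq_le (E := E) (M + R) hc
  refine ⟨ψ, hψ, fun u v hu hv huv => ?_⟩
  have hpt : ∀ n, ‖x n - midpoint ℝ u v‖ ^ 2 ≤ (‖x n - u‖ ^ 2 + ‖x n - v‖ ^ 2) / 2 - ψ :=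
    fun n => by
      have hsplit : x n - midpoint ℝ u v = midpoint ℝ (x n - u) (x n - v) := by
        simpa using midpoint_vsub_midpoint (R := ℝ) (x n) (x n) u v
      rw [hsplit]
      exact h ((norm_sub_le_of_forall_norm_le hx u n).trans (by linarith))
        ((norm_sub_le_of_forall_norm_le hx v n).trans (by linarith))
        (by rwa [sub_sub_sub_cancel_left, norm_sub_rev])
  exact limsup_le_midpoint_of_le (cesaroMean_sqDist_nonneg _) (bddAbove_cesaroMean_sqDist hx u)
    (bddAbove_cesaroMean_sqDist hx v)
    ((eventually_ne_atTop 0).mono fun _ hN => cesaroMean_le_midpoint_of_le hpt hN)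

namespace MidpointUniformlyConvex

variable {g : E → ℝ} {D : ℕ → Set E}

lemma eq_of_isMinOn (hg : MidpointUniformlyConvex g) {C : Set E} (hC : Convex ℝ C) {z w : E}
    (hmin : IsMinOn g C z) (hz : z ∈ C) (hw : w ∈ C) (hwz : g w ≤ g z) : w = z := by
  by_contra hne
  obtain ⟨ψ, hψ, h⟩ := hg (max ‖w‖ ‖z‖) ‖w - z‖ (norm_pos_iff.2 (sub_ne_zero.2 hne))
  have hmid := h (le_max_left _ _) (le_max_right _ _) le_rfl
  linarith [isMinOn_iff.1 hmin _ (hC.midpoint_mem hw hz)]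

lemma cauchySeq_of_minimizing (hg : MidpointUniformlyConvex g) (hD : Antitone D)
    (hDconv : ∀ n, Convex ℝ (D n)) {y : ℕ → E} (hyD : ∀ n, y n ∈ D n) {R : ℝ}
    (hyR : ∀ n, ‖y n‖ ≤ R) {m : ℝ} (hlow : ∀ ε > 0, ∃ n, ∀ w ∈ D n, m - ε < g w)
    (hup : ∀ ε > 0, ∀ᶠ n in atTop, g (y n) < m + ε) : CauchySeq y := by
  rw [Metric.cauchySeq_iff]
  intro ε hε
  obtain ⟨ψ, hψ, h⟩ := hg R ε hε
  obtain ⟨n₁, hn₁⟩ := hlow (ψ / 2) (half_pos hψ)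
  obtain ⟨n₂, hn₂⟩ := eventually_atTop.1 (hup (ψ / 2) (half_pos hψ))
  refine ⟨max n₁ n₂, fun j hj k hk => ?_⟩
  by_contra! hjk
  rw [dist_eq_norm] at hjk
  have hmid := hn₁ _ ((hDconv n₁).midpoint_mem (hD (le_of_max_le_left hj) (hyD j))
    (hD (le_of_max_le_left hk) (hyD k)))
  linarith [h (hyR j) (hyR k) hjk, hn₂ j (le_of_max_le_right hj), hn₂ k (le_of_max_le_right hk)]

lemma exists_mem_iInter_le [CompleteSpace E] (hg : MidpointUniformlyConvex g) (hD : Antitone D)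
    (hDclosed : ∀ n, IsClosed (D n)) (hDconv : ∀ n, Convex ℝ (D n))
    (hlsc : LowerSemicontinuous g) {y : ℕ → E} (hyD : ∀ n, y n ∈ D n) {R : ℝ}
    (hyR : ∀ n, ‖y n‖ ≤ R) {m : ℝ} (hlow : ∀ ε > 0, ∃ n, ∀ w ∈ D n, m - ε < g w)
    (hup : ∀ ε > 0, ∀ᶠ n in atTop, g (y n) < m + ε) : ∃ z ∈ ⋂ n, D n, g z ≤ m := by
  obtain ⟨z, hz⟩ := cauchySeq_tendsto_of_complete
    (hg.cauchySeq_of_minimizing hD hDconv hyD hyR hlow hup)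
  refine ⟨z, Set.mem_iInter.2 fun n => (hDclosed n).mem_of_tendsto hz
    ((eventually_ge_atTop n).mono fun k hk => hD hk (hyD k)), ?_⟩
  exact le_of_forall_pos_le_add fun ε hε => (hlsc.isClosed_preimage (m + ε)).mem_of_tendsto hz
    ((hup ε hε).mono fun _ h => h.le)

theorem exists_isMinOn_iInter [CompleteSpace E] (hg : MidpointUniformlyConvex g)
    (hD : Antitone D) (hDclosed : ∀ n, IsClosed (D n)) (hDconv : ∀ n, Convex ℝ (D n))
    (hbdd : ∃ C, ∀ n, ∃ w ∈ D n, g w ≤ C) (hbelow : BddBelow (g '' D 0))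
    (hlsc : LowerSemicontinuous g) (hcoer : ∀ c, ∃ R, ∀ z, g z ≤ c → ‖z‖ ≤ R) :
    ∃ z ∈ ⋂ n, D n, IsMinOn g (⋂ n, D n) z := by
  obtain ⟨C, hC⟩ := hbdd
  have hinf_le : ∀ n, ∀ w ∈ D n, sInf (g '' D n) ≤ g w := fun n w hw =>
    csInf_le (hbelow.mono (Set.image_mono (hD (Nat.zero_le n)))) ⟨w, hw, rfl⟩
  set m := ⨆ n, sInf (g '' D n)
  have hinf_le_m : ∀ n, sInf (g '' D n) ≤ m := le_ciSup ⟨C, by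
    rintro _ ⟨n, rfl⟩
    obtain ⟨w, hw, hwC⟩ := hC n
    exact (hinf_le n w hw).trans hwC⟩
  have hlow : ∀ ε > 0, ∃ n, ∀ w ∈ D n, m - ε < g w := fun ε hε =>
    let ⟨n, hn⟩ := exists_lt_of_lt_ciSup (sub_lt_self m hε)
    ⟨n, fun w hw => hn.trans_le (hinf_le n w hw)⟩
  have hsel : ∀ n : ℕ, ∃ w ∈ D n, g w < m + 1 / (n + 1) := fun n => by
    obtain ⟨w, hw, _⟩ := hC n
    obtain ⟨_, ⟨w, hw, rfl⟩, hlt⟩ := exists_lt_of_csInf_lt ⟨_, Set.mem_image_of_mem g hw⟩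
      (lt_add_of_pos_right (sInf (g '' D n)) (Nat.one_div_pos_of_nat (n := n)))
    exact ⟨w, hw, hlt.trans_le (by linarith [hinf_le_m n])⟩
  choose y hyD hyg using hsel
  have hup : ∀ ε > 0, ∀ᶠ n in atTop, g (y n) < m + ε := fun ε hε => by
    filter_upwards [tendsto_one_div_add_atTop_nhds_zero_nat.eventually (gt_mem_nhds hε)]
      with n hn
    linarith [hyg n]
  obtain ⟨R, hR⟩ := hcoer (m + 1)
  have hyR : ∀ n, ‖y n‖ ≤ R := fun n => hR _ <| (hyg n).le.trans <| by
    gcongr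
    exact div_le_one_of_le₀ (by linarith [n.cast_nonneg (α := ℝ)]) (by positivity)
  obtain ⟨z, hz, hzm⟩ := hg.exists_mem_iInter_le hD hDclosed hDconv hlsc hyD hyR hlow hup
  exact ⟨z, hz, fun w hw => hzm.trans (ciSup_le fun n => hinf_le n w (Set.mem_iInter.1 hw n))⟩

end MidpointUniformlyConvex

namespace IsClosedConvexCone

variable {P : Set E}

lemma zero_mem (hP : IsClosedConvexCone P) : (0 : E) ∈ P := by
  obtain ⟨⟨p, hp⟩, -, -, -, hcomb⟩ := hP
  simpa using hcomb p hp p hp 0 0 le_rfl le_rfl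

lemma add_mem (hP : IsClosedConvexCone P) {u v : E} (hu : u ∈ P) (hv : v ∈ P) : u + v ∈ P := by
  simpa using hP.2.2.2.2 u hu v hv 1 1 zero_le_one zero_le_one

lemma sub_mem_trans (hP : IsClosedConvexCone P) {a b c : E} (hab : b - a ∈ P)
    (hbc : c - b ∈ P) : c - a ∈ P := by
  simpa using hP.add_mem hbc hab

lemma isClosed_setOf_sub_mem (hP : IsClosedConvexCone P) (a : E) : IsClosed {w | w - a ∈ P} :=
  hP.2.1.preimage (continuous_id.sub continuous_const)

lemma convex_setOf_sub_mem (hP : IsClosedConvexCone P) (a : E) : Convex ℝ {w | w - a ∈ P} := by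
  intro u hu v hv s t hs ht hst
  have hcomb := hP.2.2.2.2 _ hu _ hv s t hs ht
  rwa [smul_sub, smul_sub, sub_add_sub_comm, ← add_smul, hst, one_smul] at hcomb

end IsClosedConvexCone

namespace MonotoneAlphaNonexpansive

variable {P K : Set E} {T : E → E} {α : ℝ} {x₀ : E}

lemma iterate_sub_mem (hT : MonotoneAlphaNonexpansive P K T α) (hP : IsClosedConvexCone P)
    (hTK : Set.MapsTo T K K) (hx₀ : x₀ ∈ K) (hinc : T x₀ - x₀ ∈ P) {m n : ℕ} (hmn : m ≤ n) :
    T^[n] x₀ - T^[m] x₀ ∈ P := by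
  have hstep : ∀ k, T^[k + 1] x₀ - T^[k] x₀ ∈ P := by
    intro k
    induction k with
    | zero => simpa using hinc
    | succ k ih =>
      have := hT.1 _ (hTK.iterate k hx₀) _ (hTK.iterate (k + 1) hx₀) ih
      rwa [← Function.iterate_succ_apply' T (k + 1), ← Function.iterate_succ_apply' T k] at this
  induction n, hmn using Nat.le_induction with
  | base => simpa using hP.zero_mem
  | succ n _ ih => exact hP.sub_mem_trans ih (hstep n)

lemma asymptoticSqDist_apply_le_of_upperBound (hT : MonotoneAlphaNonexpansive P K T α)
    (hα : α < 1) (hM : ∀ n, ‖T^[n] x₀‖ ≤ M) (hxK : ∀ n, T^[n] x₀ ∈ K) {z : E} (hz : z ∈ K)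
    (hzx : ∀ n, z - T^[n] x₀ ∈ P) :
    asymptoticSqDist (fun n => T^[n] x₀) (T z) ≤ asymptoticSqDist (fun n => T^[n] x₀) z :=
  asymptoticSqDist_le_of_step hM hα fun n => by
    rw [Function.iterate_succ_apply', norm_sub_rev (T^[n] x₀) (T z)]
    exact hT.2 _ (hxK n) z hz (hzx n)

end MonotoneAlphaNonexpansive

end

theorem pazy_fixed_point_increasing_general
    {E : Type*} [NormedAddCommGroup E] [NormedSpace ℝ E]
    [UniformConvexSpace E] [CompleteSpace E]
    (P : Set E) (hP : IsClosedConvexCone P)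
    (K : Set E) (hKcl : IsClosed K) (hKco : Convex ℝ K)
    (T : E → E) (hTK : ∀ x ∈ K, T x ∈ K)
    (α : ℝ) (hα : α < 1)
    (hT : MonotoneAlphaNonexpansive P K T α)
    (x₀ : E) (hx₀ : x₀ ∈ K) (hinc : T x₀ - x₀ ∈ P)
    (hbdd : ∃ M : ℝ, ∀ n : ℕ, ‖T^[n] x₀‖ ≤ M) :
    ∃ z ∈ K, T z = z ∧ z - x₀ ∈ P := by
  obtain ⟨M, hM⟩ := hbdd
  have hKT : Set.MapsTo T K K := fun _ hx => hTK _ hx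
  have hxK : ∀ n, T^[n] x₀ ∈ K := fun n => hKT.iterate n hx₀
  set D : ℕ → Set E := fun n => K ∩ {w | w - T^[n] x₀ ∈ P}
  have hD : Antitone D := fun m n hmn w hw =>
    ⟨hw.1, hP.sub_mem_trans (hT.iterate_sub_mem hP hKT hx₀ hinc hmn) hw.2⟩
  have hDconv : ∀ n, Convex ℝ (D n) := fun n => hKco.inter (hP.convex_setOf_sub_mem _)
  have hg := midpointUniformlyConvex_asymptoticSqDist hM
  obtain ⟨z, hz, hmin⟩ := hg.exists_isMinOn_iInter hD
    (fun n => hKcl.inter (hP.isClosed_setOf_sub_mem _)) hDconv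
    ⟨(2 * M) ^ 2, fun n =>
      ⟨T^[n] x₀, ⟨hxK n, by simpa using hP.zero_mem⟩, asymptoticSqDist_apply_le hM n⟩⟩
    ⟨0, by rintro _ ⟨w, -, rfl⟩; exact asymptoticSqDist_nonneg hM w⟩
    (lowerSemicontinuous_asymptoticSqDist hM)
    (fun c => ⟨M + √c, fun _ => norm_le_of_asymptoticSqDist_le hM⟩)
  have hzD : ∀ n, z ∈ D n := Set.mem_iInter.1 hz
  have hTz : T z ∈ ⋂ n, D n := Set.mem_iInter.2 fun n => hD n.le_succ
    ⟨hKT (hzD 0).1, by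
      rw [Function.iterate_succ_apply']
      exact hT.1 _ (hxK n) z (hzD n).1 (hzD n).2⟩
  have hTz_le := hT.asymptoticSqDist_apply_le_of_upperBound hα hM hxK (hzD 0).1 fun n => (hzD n).2
  exact ⟨z, (hzD 0).1, hg.eq_of_isMinOn (convex_iInter hDconv) hmin hz hTz hTz_le,
    by simpa using (hzD 0).2⟩

/-- Pazy-type fixed point theorem: if `x₀ ≤ T x₀` and the orbit of `x₀` is
norm-bounded, then `T` has a fixed point `z` with `x₀ ≤ z`. -/
theorem pazy_fixed_point_increasing
    {E : Type*} [NormedAddCommGroup E] [NormedSpace ℝ E]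
    [UniformConvexSpace E] [CompleteSpace E]
    (P : Set E) (hP : IsClosedConvexCone P)
    (K : Set E) (hKne : K.Nonempty) (hKcl : IsClosed K) (hKco : Convex ℝ K)
    (T : E → E) (hTK : ∀ x ∈ K, T x ∈ K)
    (α : ℝ) (hα : α < 1)
    (hT : MonotoneAlphaNonexpansive P K T α)
    (x₀ : E) (hx₀ : x₀ ∈ K) (hinc : T x₀ - x₀ ∈ P)
    (hbdd : ∃ M : ℝ, ∀ n : ℕ, ‖T^[n] x₀‖ ≤ M) :
    ∃ z ∈ K, T z = z ∧ z - x₀ ∈ P :=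
  pazy_fixed_point_increasing_general P hP K hKcl hKco T hTK α hα hT x₀ hx₀ hinc hbdd
end

section
/- Let E be a uniformly convex real Banach space with a partial order ≤ induced by a closed convex cone P, and let T : P → P be a monotone α-nonexpansive mapping for some α < 1 that has at least one fixed point. If the norm is monotonic (‖x‖ ≤ ‖y‖ whenever 0 ≤ x ≤ y), then the sequence Tⁿ0 converges strongly (in norm) to a fixed point z of T. -/
/-!
The Picard iterates `xₙ = Tⁿ 0` increase (monotonicity of `T`, starting at the bottom `0` of the
cone) and stay below any fixed point `p`. Hence `yₙ = p - xₙ` is a decreasing sequence in the cone,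
and by monotonicity of the norm so is `‖yₙ‖`, with limit `d`. If `d = 0` the sequence is Cauchy
because `‖yₙ - yₘ‖ ≤ ‖yₙ‖`; if `d > 0`, then `2 yₘ ≤ yₙ + yₘ` for `n ≤ m` keeps `‖yₙ + yₘ‖ ≥ 2d`,
which uniform convexity forbids once `‖yₙ - yₘ‖ ≥ ε` and `‖yₙ‖` is close to `d`. The limit `z`
of `xₙ` lies above every `xₙ`, so the α-nonexpansive inequality applies to the pairs `(xₙ, z)`,
and in the limit it reads `(1 - α) ‖T z - z‖² ≤ 0`.
-/

open Filter Topology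

theorem IsClosedConvexCone.zero_mem_s16 {E : Type*} [NormedAddCommGroup E] [NormedSpace ℝ E]
    {P : Set E} (hP : IsClosedConvexCone P) : (0 : E) ∈ P := by
  obtain ⟨⟨w, hw⟩, -, -, -, hcomb⟩ := hP
  simpa using hcomb w hw w hw 0 0 le_rfl le_rfl

theorem IsClosedConvexCone.add_mem_s16 {E : Type*} [NormedAddCommGroup E] [NormedSpace ℝ E]
    {P : Set E} (hP : IsClosedConvexCone P) {u v : E} (hu : u ∈ P) (hv : v ∈ P) :
    u + v ∈ P := by
  simpa using hP.2.2.2.2 u hu v hv 1 1 zero_le_one zero_le_one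

section UniformConvex

variable {E : Type*} [NormedAddCommGroup E] [NormedSpace ℝ E] [UniformConvexSpace E]

theorem exists_forall_norm_add_le_two_sub_mul {ε R : ℝ} (hε : 0 < ε) (hR : 0 < R) :
    ∃ δ, 0 < δ ∧ ∀ ⦃r : ℝ⦄, r ≤ R → ∀ ⦃x : E⦄, ‖x‖ ≤ r → ∀ ⦃y : E⦄, ‖y‖ ≤ r →
      ε ≤ ‖x - y‖ → ‖x + y‖ ≤ (2 - δ) * r := by
  obtain ⟨δ, hδ, hball⟩ := exists_forall_closed_ball_dist_add_le_two_sub E (div_pos hε hR)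
  refine ⟨δ, hδ, fun r hrR x hx y hy hxy => ?_⟩
  have hr : 0 < r := by linarith [(norm_sub_le x y).trans (add_le_add hx hy)]
  have hscale : ∀ v : E, ‖r⁻¹ • v‖ = ‖v‖ / r := fun v => by
    rw [norm_smul, norm_inv, Real.norm_of_nonneg hr.le, inv_mul_eq_div]
  have hsum := hball (x := r⁻¹ • x) (y := r⁻¹ • y)
    (by rw [hscale, div_le_one hr]; exact hx) (by rw [hscale, div_le_one hr]; exact hy)
    (by
      rw [← smul_sub, hscale]
      exact (div_le_div_of_nonneg_left hε.le hr hrR).trans (by gcongr))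
  rw [← smul_add, hscale, div_le_iff₀ hr] at hsum
  exact hsum

theorem cauchySeq_of_antitone_of_norm_monotone {P : Set E} (hP : IsClosedConvexCone P)
    (hnorm : ∀ x y : E, x ∈ P → y - x ∈ P → ‖x‖ ≤ ‖y‖)
    {y : ℕ → E} (hyP : ∀ n, y n ∈ P) (hanti : ∀ n m, n ≤ m → y n - y m ∈ P) :
    CauchySeq y := by
  have hnorm_anti : Antitone fun n => ‖y n‖ := antitone_nat_of_succ_le fun n =>
    hnorm _ _ (hyP (n + 1)) (hanti n (n + 1) n.le_succ)
  have hdist : ∀ n m, n ≤ m → ‖y n - y m‖ ≤ ‖y n‖ := fun n m h =>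
    hnorm _ _ (hanti n m h) (by rw [sub_sub_cancel]; exact hyP m)
  have hdouble : ∀ n m, n ≤ m → 2 * ‖y m‖ ≤ ‖y n + y m‖ := fun n m h => by
    have htwo : ‖y m + y m‖ = 2 * ‖y m‖ := by rw [← two_smul ℝ, norm_smul, Real.norm_two]
    rw [← htwo]
    refine hnorm _ _ (hP.add_mem_s16 (hyP m) (hyP m)) ?_
    rw [show y n + y m - (y m + y m) = y n - y m by abel]
    exact hanti n m h
  have htend := tendsto_atTop_ciInf hnorm_anti ⟨0, fun _ ⟨n, hn⟩ => hn ▸ norm_nonneg (y n)⟩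
  set d := ⨅ n, ‖y n‖
  have hd_le : ∀ n, d ≤ ‖y n‖ := hnorm_anti.le_of_tendsto htend
  have hd0 : 0 ≤ d := ge_of_tendsto' htend fun n => norm_nonneg (y n)
  rw [Metric.cauchySeq_iff']
  intro ε hε
  rcases hd0.eq_or_lt with hd | hd
  · obtain ⟨N, hN⟩ := (htend.eventually_lt_const (hd ▸ hε)).exists
    exact ⟨N, fun n hn => by rw [dist_eq_norm, norm_sub_rev]; exact (hdist N n hn).trans_lt hN⟩
  · obtain ⟨δ, hδ, hconv⟩ := 
      exists_forall_norm_add_le_two_sub_mul (E := E) hε (hd.trans_le (hd_le 0))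
    have hlt : (2 - δ) * d < 2 * d := by nlinarith
    obtain ⟨N, hN⟩ := ((htend.const_mul (2 - δ)).eventually_lt_const hlt).exists
    refine ⟨N, fun n hn => ?_⟩
    by_contra! hfar
    rw [dist_eq_norm, norm_sub_rev] at hfar
    have := hconv (hnorm_anti (Nat.zero_le N)) le_rfl (hnorm_anti hn) hfar
    linarith [hdouble N n hn, hd_le n]

end UniformConvex

theorem iterate_sub_mem_of_sub_mem {E : Type*} [AddGroup E] {P : Set E} {T : E → E}
    (hTP : ∀ x ∈ P, T x ∈ P) (hmono : ∀ x ∈ P, ∀ y ∈ P, y - x ∈ P → T y - T x ∈ P) (n : ℕ)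
    {x y : E} (hx : x ∈ P) (hy : y ∈ P) (hxy : y - x ∈ P) : T^[n] y - T^[n] x ∈ P := by
  induction n generalizing x y with
  | zero => exact hxy
  | succ n ih =>
    simp only [Function.iterate_succ_apply]
    exact ih (hTP x hx) (hTP y hy) (hmono x hx y hy hxy)

theorem isFixedPt_of_tendsto_of_alpha_ineq {E : Type*} [NormedAddCommGroup E] {T : E → E}
    {α : ℝ} (hα : α < 1) {u : ℕ → E} {z : E} (hu : Tendsto u atTop (𝓝 z))
    (hTu : Tendsto (fun n => T (u n)) atTop (𝓝 z))
    (hineq : ∀ n, ‖T (u n) - T z‖ ^ 2 ≤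
      α * ‖T (u n) - z‖ ^ 2 + α * ‖T z - u n‖ ^ 2 + (1 - 2 * α) * ‖u n - z‖ ^ 2) :
    Function.IsFixedPt T z := by
  have hlim := le_of_tendsto_of_tendsto' ((hTu.sub_const (T z)).norm.pow 2)
    ((((hTu.sub_const z).norm.pow 2).const_mul α).add
      (((tendsto_const_nhds.sub hu).norm.pow 2).const_mul α) |>.add
      (((hu.sub_const z).norm.pow 2).const_mul _)) hineq
  simp only [sub_self, norm_zero, norm_sub_rev z (T z)] at hlim
  have hsq : ‖T z - z‖ ^ 2 ≤ 0 := by nlinarith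
  exact sub_eq_zero.mp (norm_eq_zero.mp (pow_eq_zero_iff two_ne_zero |>.mp
    (le_antisymm hsq (sq_nonneg _))))

/-- If a monotone α-nonexpansive self-map of the cone `P` has a fixed point
and the norm is monotonic, then the Picard iterates of `0` converge strongly
to a fixed point of `T`. -/
theorem picard_strong_convergence_from_zero
    {E : Type*} [NormedAddCommGroup E] [NormedSpace ℝ E]
    [UniformConvexSpace E] [CompleteSpace E]
    (P : Set E) (hP : IsClosedConvexCone P)
    (T : E → E) (hTP : ∀ x ∈ P, T x ∈ P)
    (α : ℝ) (hα : α < 1)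
    (hT : MonotoneAlphaNonexpansive P P T α)
    (hfix : ∃ p ∈ P, T p = p)
    (hnorm : ∀ x y : E, x ∈ P → y - x ∈ P → ‖x‖ ≤ ‖y‖) :
    ∃ z ∈ P, T z = z ∧ Tendsto (fun n => T^[n] (0 : E)) atTop (𝓝 z) := by
  obtain ⟨p, hpP, hTp⟩ := hfix
  obtain ⟨hmono, hineq⟩ := hT
  set x : ℕ → E := fun n => T^[n] 0
  have h0 := hP.zero_mem_s16
  have hclosed : IsClosed P := hP.2.1
  have hxP : ∀ n, x n ∈ P := fun n => Set.MapsTo.iterate (fun u hu => hTP u hu) n h0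
  have hxp : ∀ n, p - x n ∈ P := fun n => by
    simpa [x, Function.iterate_fixed hTp] using
      iterate_sub_mem_of_sub_mem hTP hmono n h0 hpP (by simpa using hpP)
  have hxx : ∀ n m, n ≤ m → x m - x n ∈ P := fun n m h => by
    obtain ⟨k, rfl⟩ := Nat.exists_eq_add_of_le h
    simpa [x, Function.iterate_add_apply] using
      iterate_sub_mem_of_sub_mem hTP hmono n h0 (hxP k) (by simpa using hxP k)
  obtain ⟨w, hw⟩ := cauchySeq_tendsto_of_complete <|
    cauchySeq_of_antitone_of_norm_monotone hP hnorm hxp fun n m h => by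
      simpa only [sub_sub_sub_cancel_left] using hxx n m h
  obtain ⟨z, hz⟩ : ∃ z, Tendsto x atTop (𝓝 z) :=
    ⟨p - w, by simpa using (tendsto_const_nhds (x := p)).sub hw⟩
  have hzP : z ∈ P := hclosed.mem_of_tendsto hz (.of_forall hxP)
  have hxz : ∀ n, z - x n ∈ P := fun n =>
    hclosed.mem_of_tendsto (hz.sub_const (x n)) ((eventually_ge_atTop n).mono (hxx n))
  have hTx : Tendsto (fun n => T (x n)) atTop (𝓝 z) :=
    ((tendsto_add_atTop_iff_nat 1).2 hz).congr fun n => Function.iterate_succ_apply' T n 0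
  exact ⟨z, hzP, isFixedPt_of_tendsto_of_alpha_ineq hα hz hTx
    fun n => hineq _ (hxP n) _ hzP (hxz n), hz⟩
end
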